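/- arXiv:2505.12097 — 3 statements merged into one kernel-verified Lean document; each statement's English description precedes it below -/
import Mathlib

section
/- Let X be a Polish space and suppose Assumptions A-T and A-D hold. Then for every ε > 0 the proximal optimal transport divergence 𝔇^c_ε is a divergence: for all Borel probability measures P, Q on X one has 𝔇^c_ε(P‖Q) ≥ 0, and 𝔇^c_ε(P‖Q) = 0 if and only if P = Q. -/
open MeasureTheory Filter Topology

/-- The optimal transport cost between two measures for the cost function `c`,
defined as the infimum of `∫ c dπ` over all couplings `π` of `P` and `Q`. -/
noncomputable def transportCost {X Y : Type*} [MeasurableSpace X] [MeasurableSpace Y]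
    (c : X × Y → ENNReal) (P : Measure X) (Q : Measure Y) : ENNReal :=
  ⨅ π ∈ {π : Measure (X × Y) | π.map Prod.fst = P ∧ π.map Prod.snd = Q}, ∫⁻ z, c z ∂π

/-- The proximal optimal transport divergence
`𝔇^c_ε(P‖Q) = inf_R [ T_c(P,R) + ε 𝔇(R‖Q) ]`. -/
noncomputable def proxOT {X : Type*} [MeasurableSpace X]
    (c : X × X → ENNReal) (D : ProbabilityMeasure X → ProbabilityMeasure X → ENNReal)
    (ε : ENNReal) (P Q : ProbabilityMeasure X) : ENNReal :=
  ⨅ R : ProbabilityMeasure X,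
    transportCost c (P : Measure X) (R : Measure X) + ε * D R Q

/-!
If `𝔇^c_ε(P‖Q) = 0`, there are `R_n` with `T_c(P, R_n) → 0` and `𝔇(R_n‖Q) → 0`, witnessed by
couplings `π_n` of `P` and `R_n`. The `R_n` lie in a weakly compact sublevel set of `𝔇(·‖Q)`,
so by Prokhorov's theorem the `π_n` have a weakly convergent subsequence, whose limit `ρ` is a
coupling of `P` and some limit point `R` of the `R_n`. Lower semicontinuity of `𝔇` gives
`𝔇(R‖Q) = 0`, i.e. `R = Q`, and lower semicontinuity of `c` (through the portmanteau theorem)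
gives `∫ c dρ = 0`; hence `T_c(P, Q) = 0` and `P = Q` by Assumption A-T.
-/

open Set
open scoped ENNReal

section Coupling

variable {X Y : Type*} [MeasurableSpace X] [MeasurableSpace Y] {c : X × Y → ℝ≥0∞}

lemma transportCost_le_lintegral {P : Measure X} {Q : Measure Y} {π : Measure (X × Y)}
    (h₁ : π.map Prod.fst = P) (h₂ : π.map Prod.snd = Q) :
    transportCost c P Q ≤ ∫⁻ z, c z ∂π :=
  iInf₂_le π ⟨h₁, h₂⟩

lemma exists_coupling_lintegral_lt {P : ProbabilityMeasure X} {Q : ProbabilityMeasure Y}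
    {a : ℝ≥0∞} (h : transportCost c (P : Measure X) (Q : Measure Y) < a) :
    ∃ π : ProbabilityMeasure (X × Y), (π : Measure (X × Y)).map Prod.fst = P ∧
      (π : Measure (X × Y)).map Prod.snd = Q ∧ ∫⁻ z, c z ∂(π : Measure (X × Y)) < a := by
  obtain ⟨π, ⟨h₁, h₂⟩, hπ⟩ : ∃ π : Measure (X × Y),
      (π.map Prod.fst = P ∧ π.map Prod.snd = Q) ∧ ∫⁻ z, c z ∂π < a := by
    simpa only [transportCost, iInf_lt_iff, exists_prop, mem_ofPred_eq] using h
  have : IsProbabilityMeasure (π.map Prod.fst) := h₁ ▸ inferInstance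
  have : IsProbabilityMeasure π := Measure.isProbabilityMeasure_of_map Prod.fst
  exact ⟨⟨π, this⟩, h₁, h₂, hπ⟩

end Coupling

section Portmanteau

variable {Ω : Type*} [MeasurableSpace Ω] [TopologicalSpace Ω] [OpensMeasurableSpace Ω]
  [HasOuterApproxClosed Ω]

lemma ProbabilityMeasure.lintegral_eq_zero_of_tendsto {ι : Type*} {L : Filter ι} [L.NeBot]
    {μs : ι → ProbabilityMeasure Ω} {μ : ProbabilityMeasure Ω} (hμ : Tendsto μs L (𝓝 μ))
    {f : Ω → ℝ≥0∞} (hf : LowerSemicontinuous f)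
    (hfμ : Tendsto (fun i ↦ ∫⁻ x, f x ∂(μs i : Measure Ω)) L (𝓝 0)) :
    ∫⁻ x, f x ∂(μ : Measure Ω) = 0 := by
  have hmeas : Measurable f := hf.measurable
  have hsuper : ∀ δ : ℝ≥0∞, δ ≠ 0 → (μ : Measure Ω) {x | δ < f x} = 0 := by
    intro δ hδ
    rcases eq_or_ne δ ⊤ with rfl | hδ'
    · simp
    have hmarkov : ∀ i, (μs i : Measure Ω) {x | δ < f x} ≤ (∫⁻ x, f x ∂(μs i : Measure Ω)) / δ :=
      fun i ↦ (measure_mono fun x (hx : δ < f x) ↦ hx.le).trans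
        (meas_ge_le_lintegral_div hmeas.aemeasurable hδ hδ')
    have hlim : Tendsto (fun i ↦ (∫⁻ x, f x ∂(μs i : Measure Ω)) / δ) L (𝓝 0) := by
      simpa using ENNReal.Tendsto.div_const hfμ (Or.inr hδ)
    refine le_antisymm ?_ zero_le
    calc (μ : Measure Ω) {x | δ < f x}
        ≤ L.liminf (fun i ↦ (μs i : Measure Ω) {x | δ < f x}) :=
          ProbabilityMeasure.le_liminf_measure_open_of_tendsto hμ (hf.isOpen_preimage δ)
      _ ≤ L.liminf (fun i ↦ (∫⁻ x, f x ∂(μs i : Measure Ω)) / δ) :=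
          liminf_le_liminf (Eventually.of_forall hmarkov)
      _ = 0 := hlim.liminf_eq
  refine (lintegral_eq_zero_iff hmeas).2 (measure_mono_null (fun x (hx : f x ≠ 0) ↦ ?_)
    (measure_iUnion_null fun n : ℕ ↦ hsuper (n : ℝ≥0∞)⁻¹ (by simp)))
  obtain ⟨n, hn⟩ := ENNReal.exists_inv_nat_lt hx
  exact mem_iUnion.2 ⟨n, hn⟩

end Portmanteau

lemma LowerSemicontinuous.eq_zero_of_tendsto {α ι : Type*} [TopologicalSpace α]
    {f : α → ℝ≥0∞} (hf : LowerSemicontinuous f) {L : Filter ι} [L.NeBot] {u : ι → α} {x : α}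
    (hu : Tendsto u L (𝓝 x)) (hfu : Tendsto (f ∘ u) L (𝓝 0)) : f x = 0 := by
  by_contra hx
  obtain ⟨y, hy0, hyx⟩ := exists_between (pos_iff_ne_zero.2 hx)
  obtain ⟨i, hlt, hgt⟩ :=
    ((hu.eventually (hf x y hyx)).and (hfu.eventually (gt_mem_nhds hy0))).exists
  exact (hlt.trans hgt).false

lemma ProbabilityMeasure.tendsto_of_forall_map_eq {Ω Ω' ι : Type*} [MeasurableSpace Ω]
    [TopologicalSpace Ω] [OpensMeasurableSpace Ω] [MeasurableSpace Ω'] [TopologicalSpace Ω']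
    [BorelSpace Ω'] {L : Filter ι} {πs : ι → ProbabilityMeasure Ω} {π : ProbabilityMeasure Ω}
    (hπ : Tendsto πs L (𝓝 π)) {f : Ω → Ω'} (hf : Continuous f) {νs : ι → ProbabilityMeasure Ω'}
    (hν : ∀ i, (πs i : Measure Ω).map f = νs i) :
    Tendsto νs L (𝓝 (π.map hf.measurable.aemeasurable)) := by
  convert ProbabilityMeasure.tendsto_map_of_tendsto_of_continuous πs π hπ hf
  exact Subtype.ext (hν _).symm

section Polish

variable {X Y : Type*} [TopologicalSpace X] [PolishSpace X] [MeasurableSpace X] [BorelSpace X]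
  [TopologicalSpace Y] [PolishSpace Y] [MeasurableSpace Y] [BorelSpace Y]

lemma ProbabilityMeasure.isCompact_closure_of_map_fst_mem_of_map_snd_mem
    {K₁ : Set (ProbabilityMeasure X)} {K₂ : Set (ProbabilityMeasure Y)}
    (hK₁ : IsCompact K₁) (hK₂ : IsCompact K₂) {S : Set (ProbabilityMeasure (X × Y))}
    (hS₁ : ∀ π ∈ S, ∃ μ ∈ K₁, (π : Measure (X × Y)).map Prod.fst = μ)
    (hS₂ : ∀ π ∈ S, ∃ ν ∈ K₂, (π : Measure (X × Y)).map Prod.snd = ν) :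
    IsCompact (closure S) := by
  let _ := TopologicalSpace.upgradeIsCompletelyMetrizable X
  let _ := TopologicalSpace.upgradeIsCompletelyMetrizable Y
  refine isCompact_closure_of_isTightMeasureSet (IsTightMeasureSet.prodMk ?_ ?_)
  · refine (isTightMeasureSet_of_isCompact_closure (hK₁.isClosed.closure_eq ▸ hK₁)).subset ?_
    rintro _ ⟨_, ⟨π, hπ, rfl⟩, rfl⟩
    obtain ⟨μ, hμ, h⟩ := hS₁ π hπ
    exact ⟨μ, hμ, h.symm⟩
  · refine (isTightMeasureSet_of_isCompact_closure (hK₂.isClosed.closure_eq ▸ hK₂)).subset ?_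
    rintro _ ⟨_, ⟨π, hπ, rfl⟩, rfl⟩
    obtain ⟨ν, hν, h⟩ := hS₂ π hπ
    exact ⟨ν, hν, h.symm⟩

lemma exists_subseq_tendsto_coupling {P : ProbabilityMeasure X} {K : Set (ProbabilityMeasure Y)}
    (hK : IsCompact K) {R : ℕ → ProbabilityMeasure Y} (hR : ∀ n, R n ∈ K)
    {π : ℕ → ProbabilityMeasure (X × Y)}
    (hπ : ∀ n, (π n : Measure (X × Y)).map Prod.fst = P ∧
      (π n : Measure (X × Y)).map Prod.snd = R n) :
    ∃ (ρ : ProbabilityMeasure (X × Y)) (ψ : ℕ → ℕ), StrictMono ψ ∧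
      Tendsto (π ∘ ψ) atTop (𝓝 ρ) ∧ (ρ : Measure (X × Y)).map Prod.fst = P ∧
      Tendsto (R ∘ ψ) atTop (𝓝 (ρ.map continuous_snd.measurable.aemeasurable)) := by
  obtain ⟨ρ, -, ψ, hψ, hlim⟩ :=
    (ProbabilityMeasure.isCompact_closure_of_map_fst_mem_of_map_snd_mem isCompact_singleton hK
      (S := range π) (by simpa using fun n ↦ (hπ n).1)
      (by simpa using fun n ↦ ⟨R n, hR n, (hπ n).2⟩)).tendsto_subseq
      fun n ↦ subset_closure (mem_range_self n)
  have hfst : P = ρ.map continuous_fst.measurable.aemeasurable :=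
    tendsto_nhds_unique tendsto_const_nhds
      (ProbabilityMeasure.tendsto_of_forall_map_eq hlim continuous_fst fun k ↦ (hπ (ψ k)).1)
  exact ⟨ρ, ψ, hψ, hlim, (congrArg Subtype.val hfst).symm,
    ProbabilityMeasure.tendsto_of_forall_map_eq hlim continuous_snd fun k ↦ (hπ (ψ k)).2⟩

end Polish

section ProxOT

variable {X : Type*} [MeasurableSpace X] {c : X × X → ℝ≥0∞}
  {D : ProbabilityMeasure X → ProbabilityMeasure X → ℝ≥0∞} {ε : ℝ≥0∞}

lemma proxOT_self {P : ProbabilityMeasure X} (hT : transportCost c (P : Measure X) P = 0)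
    (hD : D P P = 0) : proxOT c D ε P P = 0 :=
  le_antisymm ((iInf_le _ P).trans_eq (by rw [hT, hD, mul_zero, add_zero])) zero_le

lemma exists_seq_of_proxOT_eq_zero (hε : ε ≠ 0) {P Q : ProbabilityMeasure X}
    (h : proxOT c D ε P Q = 0) :
    ∃ (R : ℕ → ProbabilityMeasure X) (π : ℕ → ProbabilityMeasure (X × X)),
      (∀ n, (π n : Measure (X × X)).map Prod.fst = P ∧
        (π n : Measure (X × X)).map Prod.snd = R n) ∧
      Tendsto (fun n ↦ ∫⁻ z, c z ∂(π n : Measure (X × X))) atTop (𝓝 0) ∧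
      Tendsto (fun n ↦ D (R n) Q) atTop (𝓝 0) ∧ ∀ n, D (R n) Q ≤ ε⁻¹ := by
  have hnear : ∀ n : ℕ, ∃ (R : ProbabilityMeasure X) (π : ProbabilityMeasure (X × X)),
      ((π : Measure (X × X)).map Prod.fst = P ∧ (π : Measure (X × X)).map Prod.snd = R) ∧
      ∫⁻ z, c z ∂(π : Measure (X × X)) < ((n : ℝ≥0∞) + 1)⁻¹ ∧
      D R Q ≤ ((n : ℝ≥0∞) + 1)⁻¹ / ε := by
    intro n
    have hpos : 0 < ((n : ℝ≥0∞) + 1)⁻¹ := by simp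
    obtain ⟨R, hR⟩ := iInf_lt_iff.1 (h ▸ hpos : proxOT c D ε P Q < _)
    obtain ⟨π, hπ₁, hπ₂, hπ⟩ := exists_coupling_lintegral_lt (le_self_add.trans_lt hR)
    refine ⟨R, π, ⟨hπ₁, hπ₂⟩, hπ, ?_⟩
    rw [ENNReal.le_div_iff_mul_le (Or.inr hpos.ne') (Or.inr (by simp)), mul_comm]
    exact (le_add_self.trans_lt hR).le
  choose R π hπ hcost hD using hnear
  have hinv : Tendsto (fun n : ℕ ↦ ((n : ℝ≥0∞) + 1)⁻¹) atTop (𝓝 0) := by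
    simpa [Function.comp_def] using ENNReal.tendsto_inv_nat_nhds_zero.comp (tendsto_add_atTop_nat 1)
  refine ⟨R, π, hπ, tendsto_of_tendsto_of_tendsto_of_le_of_le tendsto_const_nhds hinv
    (fun _ ↦ zero_le) (fun n ↦ (hcost n).le), tendsto_of_tendsto_of_tendsto_of_le_of_le
    tendsto_const_nhds (by simpa using ENNReal.Tendsto.div_const hinv (Or.inr hε))
    (fun _ ↦ zero_le) hD, fun n ↦ (hD n).trans ?_⟩
  rw [div_eq_mul_inv]
  exact mul_le_of_le_one_left zero_le (ENNReal.inv_le_one.2 le_add_self)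

end ProxOT

theorem proxOT_divergence_general
    {X : Type*} [TopologicalSpace X] [PolishSpace X] [MeasurableSpace X] [BorelSpace X]
    (c : X × X → ENNReal) (hc : LowerSemicontinuous c)
    -- Assumption A-T: the transport cost is a divergence
    (hT0 : ∀ P Q : ProbabilityMeasure X,
      transportCost c (P : Measure X) (Q : Measure X) = 0 ↔ P = Q)
    (D : ProbabilityMeasure X → ProbabilityMeasure X → ENNReal)
    -- Assumption A-D: `D` is a divergence,
    (hD0 : ∀ P Q : ProbabilityMeasure X, D P Q = 0 ↔ P = Q)
    -- lower semicontinuous in the weak topology,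
    (hDlsc : LowerSemicontinuous
      (fun PQ : ProbabilityMeasure X × ProbabilityMeasure X => D PQ.1 PQ.2))
    -- with weakly precompact sublevel sets,
    (hDcpt : ∀ (Q : ProbabilityMeasure X) (α : NNReal),
      IsCompact (closure {R : ProbabilityMeasure X | D R Q ≤ (α : ENNReal)}))
    (ε : ENNReal) (hε : 0 < ε)
    (P Q : ProbabilityMeasure X) :
    0 ≤ proxOT c D ε P Q ∧ (proxOT c D ε P Q = 0 ↔ P = Q) := by
  refine ⟨zero_le, fun h ↦ ?_, ?_⟩
  · obtain ⟨R, π, hπ, hcost, hD, hDbdd⟩ := exists_seq_of_proxOT_eq_zero hε.ne' h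
    have hR : ∀ n, R n ∈ closure {R' | D R' Q ≤ (ε⁻¹.toNNReal : ℝ≥0∞)} := fun n ↦
      subset_closure (by rw [ENNReal.coe_toNNReal (ENNReal.inv_ne_top.2 hε.ne')]; exact hDbdd n)
    obtain ⟨ρ, ψ, hψ, hlim, hfst, hsnd⟩ := exists_subseq_tendsto_coupling (hDcpt Q _) hR hπ
    have hρQ : ρ.map continuous_snd.measurable.aemeasurable = Q :=
      (hD0 _ Q).1 <| hDlsc.eq_zero_of_tendsto (hsnd.prodMk_nhds tendsto_const_nhds)
        (hD.comp hψ.tendsto_atTop)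
    have hcostρ : ∫⁻ z, c z ∂(ρ : Measure (X × X)) = 0 :=
      ProbabilityMeasure.lintegral_eq_zero_of_tendsto hlim hc (hcost.comp hψ.tendsto_atTop)
    exact (hT0 P Q).1 <| nonpos_iff_eq_zero.1 <|
      hcostρ ▸ transportCost_le_lintegral hfst (congrArg Subtype.val hρQ)
  · rintro rfl
    exact proxOT_self ((hT0 P P).2 rfl) ((hD0 P P).2 rfl)

/-- The proximal OT divergence is a divergence: it is nonnegative and vanishes iff `P = Q`. -/
theorem proxOT_divergence
    {X : Type*} [TopologicalSpace X] [PolishSpace X] [MeasurableSpace X] [BorelSpace X]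
    (c : X × X → ENNReal) (hc : LowerSemicontinuous c)
    -- Assumption A-T: the transport cost is a divergence
    (hT0 : ∀ P Q : ProbabilityMeasure X,
      transportCost c (P : Measure X) (Q : Measure X) = 0 ↔ P = Q)
    (D : ProbabilityMeasure X → ProbabilityMeasure X → ENNReal)
    -- Assumption A-D: `D` is a divergence,
    (hD0 : ∀ P Q : ProbabilityMeasure X, D P Q = 0 ↔ P = Q)
    -- jointly convex,
    (hDcvx : ∀ (P₁ P₂ Q₁ Q₂ Pm Qm : ProbabilityMeasure X) (t : ENNReal), t ≤ 1 →
      (Pm : Measure X) = t • (P₁ : Measure X) + (1 - t) • (P₂ : Measure X) →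
      (Qm : Measure X) = t • (Q₁ : Measure X) + (1 - t) • (Q₂ : Measure X) →
      D Pm Qm ≤ t * D P₁ Q₁ + (1 - t) * D P₂ Q₂)
    -- lower semicontinuous in the weak topology,
    (hDlsc : LowerSemicontinuous
      (fun PQ : ProbabilityMeasure X × ProbabilityMeasure X => D PQ.1 PQ.2))
    -- with weakly precompact sublevel sets,
    (hDcpt : ∀ (Q : ProbabilityMeasure X) (α : NNReal),
      IsCompact (closure {R : ProbabilityMeasure X | D R Q ≤ (α : ENNReal)}))
    -- and strictly convex in its first argument on the set where it is finite
    (hDsc : ∀ (Q R₁ R₂ Rm : ProbabilityMeasure X) (t : ENNReal), R₁ ≠ R₂ →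
      D R₁ Q < ⊤ → D R₂ Q < ⊤ → 0 < t → t < 1 →
      (Rm : Measure X) = t • (R₁ : Measure X) + (1 - t) • (R₂ : Measure X) →
      D Rm Q < t * D R₁ Q + (1 - t) * D R₂ Q)
    (ε : ENNReal) (hε : 0 < ε) (hε' : ε ≠ ⊤)
    (P Q : ProbabilityMeasure X) :
    0 ≤ proxOT c D ε P Q ∧ (proxOT c D ε P Q = 0 ↔ P = Q) :=
  proxOT_divergence_general c hc hT0 D hD0 hDlsc hDcpt ε hε P Q
end

section
/- Let X and Y be Polish spaces, c : X × Y → [0,∞) bounded and uniformly continuous, P a Borel probability measure on X, Q a Borel probability measure on Y, and ε > 0. Then the dual problem sup_{(φ,ψ) ∈ Φ_c} { ∫ φ dP − ε log ∫ e^{−ψ/ε} dQ } admits a maximizer (φ*, ψ*) ∈ Φ_c. Moreover the maximizer is unique up to a constant shift: if (φ₁,ψ₁) and (φ₂,ψ₂) are both maximizers, then there is a constant a ∈ ℝ such that φ₁ = φ₂ − a P-almost surely and ψ₁ = ψ₂ + a Q-almost surely. -/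
/-! Existence is the direct method. Replacing a feasible pair by the double `c`-transform of a
shift of its first member only increases the objective, and yields a pair bounded by `sup c`
whose members inherit the modulus of continuity of `c`. A maximizing sequence of such pairs is
equicontinuous and uniformly bounded, so a diagonal argument on countable dense sets gives a
pointwise convergent subsequence, and dominated convergence passes the objective to the limit.

For uniqueness, the midpoint of two maximizers is feasible, which forces equality in the
Cauchy–Schwarz inequality for `e^{-ψ₁/2ε}` and `e^{-ψ₂/2ε}`, so `ψ₁ = ψ₂ + a` a.e. for a
constant `a`. The pair `(max φ₁ (φ₂ - a), min ψ₁ (ψ₂ + a))` is then feasible with the same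
`ψ`-term as `(φ₁, ψ₁)`, so maximality gives `φ₂ - a ≤ φ₁` a.e., and symmetrically. -/

open MeasureTheory Filter Topology

/-- The Kullback-Leibler divergence `𝔇_KL(R‖Q) = ∫ log (dR/dQ) dR` if `R ≪ Q`
(and the integral makes sense), and `+∞` otherwise. -/
noncomputable def klDiv {Y : Type*} [MeasurableSpace Y] (R Q : Measure Y) : ENNReal :=
  open Classical in
  if R ≪ Q ∧ Integrable (llr R Q) R then ENNReal.ofReal (integral R (fun y => llr R Q y)) else ⊤

/-- The proximal optimal transport divergence with the KL divergence:
`𝔇^c_{KL,ε}(P‖Q) = inf_R [ T_c(P,R) + ε 𝔇_KL(R‖Q) ]`. -/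
noncomputable def proxOTKL {X Y : Type*} [MeasurableSpace X] [MeasurableSpace Y]
    (c : X × Y → ENNReal) (ε : ℝ) (P : Measure X) (Q : Measure Y) : ENNReal :=
  ⨅ R : ProbabilityMeasure Y,
    transportCost c P (R : Measure Y) + ENNReal.ofReal ε * klDiv (R : Measure Y) Q

/-- The dual objective `J(φ,ψ) = ∫ φ dP − ε log ∫ e^{−ψ/ε} dQ`. -/
noncomputable def dualObj {X Y : Type*} [MeasurableSpace X] [MeasurableSpace Y]
    [TopologicalSpace X] [TopologicalSpace Y]
    (P : Measure X) (Q : Measure Y) (ε : ℝ)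
    (φ : BoundedContinuousFunction X ℝ) (ψ : BoundedContinuousFunction Y ℝ) : ℝ :=
  ∫ x, φ x ∂P - ε * Real.log (∫ y, Real.exp (-(ψ y) / ε) ∂Q)

/-- `(φ,ψ)` is a maximizer of the dual problem over `Φ_c`. -/
def IsDualMaximizer {X Y : Type*} [MeasurableSpace X] [MeasurableSpace Y]
    [TopologicalSpace X] [TopologicalSpace Y]
    (c : X × Y → ℝ) (P : Measure X) (Q : Measure Y) (ε : ℝ)
    (φ : BoundedContinuousFunction X ℝ) (ψ : BoundedContinuousFunction Y ℝ) : Prop :=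
  (∀ x y, φ x + ψ y ≤ c (x, y)) ∧
    ∀ (φ' : BoundedContinuousFunction X ℝ) (ψ' : BoundedContinuousFunction Y ℝ),
      (∀ x y, φ' x + ψ' y ≤ c (x, y)) → dualObj P Q ε φ' ψ' ≤ dualObj P Q ε φ ψ

open Set Real BoundedContinuousFunction

section CTransform

variable {A B : Type*} {k : A → B → ℝ} {g : B → ℝ}

/-- For `k a b = c (a, b)` this is the `c`-transform of optimal transport. -/
noncomputable def cTransform (k : A → B → ℝ) (g : B → ℝ) (a : A) : ℝ :=
  ⨅ b, k a b - g b

lemma cTransform_le (hk : ∀ a b, 0 ≤ k a b) (hg : BddAbove (range g)) (a : A) (b : B) :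
    cTransform k g a ≤ k a b - g b := by
  obtain ⟨C, hC⟩ := hg
  refine ciInf_le ⟨-C, ?_⟩ b
  rintro _ ⟨b', rfl⟩
  linarith [hk a b', hC (mem_range_self b')]

lemma le_cTransform [Nonempty B] {a : A} {v : ℝ} (h : ∀ b, v ≤ k a b - g b) :
    v ≤ cTransform k g a :=
  le_ciInf h

lemma abs_cTransform_sub_le [Nonempty B] (hk : ∀ a b, 0 ≤ k a b) (hg : BddAbove (range g))
    {a a' : A} {δ : ℝ} (h : ∀ b, |k a b - k a' b| ≤ δ) :
    |cTransform k g a - cTransform k g a'| ≤ δ := by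
  have key : ∀ u u', (∀ b, k u b ≤ k u' b + δ) → cTransform k g u ≤ cTransform k g u' + δ := by
    intro u u' huu'
    have : cTransform k g u - δ ≤ cTransform k g u' :=
      le_cTransform fun b => by linarith [cTransform_le hk hg u b, huu' b]
    linarith
  rw [abs_sub_le_iff]
  constructor
  · linarith [key a a' fun b => by linarith [(abs_sub_le_iff.1 (h b)).1]]
  · linarith [key a' a fun b => by linarith [(abs_sub_le_iff.1 (h b)).2]]

lemma uniformEquicontinuous_image_cTransform [PseudoMetricSpace A] [Nonempty B]
    (hk : ∀ a b, 0 ≤ k a b) (hk_uc : UniformEquicontinuous fun b a => k a b) :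
    (cTransform k '' {g | BddAbove (range g)}).UniformEquicontinuous := by
  rw [Set.UniformEquicontinuous, Metric.uniformEquicontinuous_iff]
  intro δ hδ
  obtain ⟨η, hη, hkη⟩ := Metric.uniformEquicontinuous_iff.1 hk_uc (δ / 2) (half_pos hδ)
  refine ⟨η, hη, fun a a' haa' ⟨_, g, hg, rfl⟩ => ?_⟩
  rw [Real.dist_eq]
  refine (abs_cTransform_sub_le hk hg fun b => ?_).trans_lt (half_lt_self hδ)
  exact (Real.dist_eq _ _ ▸ hkη a a' haa' b).le

end CTransform

lemma UniformContinuous.uniformEquicontinuous_flip {α β γ : Type*} [PseudoMetricSpace α]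
    [PseudoMetricSpace β] [PseudoMetricSpace γ] {f : α × β → γ} (hf : UniformContinuous f) :
    UniformEquicontinuous fun b a => f (a, b) := by
  rw [Metric.uniformEquicontinuous_iff]
  intro δ hδ
  obtain ⟨η, hη, hfη⟩ := Metric.uniformContinuous_iff.1 hf δ hδ
  exact ⟨η, hη, fun a a' h b => hfη (by simpa [Prod.dist_eq] using h)⟩

section Subsequence

variable {X α : Type*} [TopologicalSpace X] [PseudoMetricSpace α]

lemma EquicontinuousAt.cauchySeq_of_dense {F : ℕ → X → α} {x : X} (hF : EquicontinuousAt F x)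
    {s : Set X} (hs : Dense s) (h : ∀ y ∈ s, CauchySeq fun n => F n y) :
    CauchySeq fun n => F n x := by
  rw [Metric.cauchySeq_iff']
  intro δ hδ
  obtain ⟨y, hys, hy⟩ :=
    hs.inter_nhds_nonempty (Metric.equicontinuousAt_iff_right.1 hF (δ / 3) (by positivity))
  obtain ⟨N, hN⟩ := Metric.cauchySeq_iff'.1 (h y hys) (δ / 3) (by positivity)
  refine ⟨N, fun n hn => ?_⟩
  calc dist (F n x) (F N x)
      ≤ dist (F n x) (F n y) + dist (F n y) (F N y) + dist (F N y) (F N x) :=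
        dist_triangle4 _ _ _ _
    _ < δ / 3 + δ / 3 + δ / 3 := by
        gcongr
        exacts [hy n, hN n hn, dist_comm (F N y) (F N x) ▸ hy N]
    _ = δ := by ring

lemma Equicontinuous.exists_subseq_tendsto [TopologicalSpace.SeparableSpace X]
    {F : ℕ → X → α} (hF : Equicontinuous F) {K : Set α} (hK : IsCompact K)
    (hFK : ∀ n x, F n x ∈ K) :
    ∃ f : X → α, ∃ σ : ℕ → ℕ, StrictMono σ ∧ (∀ x, f x ∈ K) ∧
      ∀ x, Tendsto (fun n => F (σ n) x) atTop (𝓝 (f x)) := by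
  obtain ⟨s, hs_count, hs_dense⟩ := TopologicalSpace.exists_countable_dense X
  have := hs_count.to_subtype
  have := isCompact_iff_compactSpace.1 hK
  obtain ⟨L, -, σ, hσ, hL⟩ := (isCompact_univ (X := s → K)).tendsto_subseq
    (x := fun n y => ⟨F n y, hFK n y⟩) fun _ => mem_univ _
  have hcauchy (x : X) : CauchySeq fun n => F (σ n) x :=
    (hF.comp σ x).cauchySeq_of_dense hs_dense fun y hy =>
      (show Tendsto (fun n => F (σ n) y) atTop (𝓝 (L ⟨y, hy⟩)) from
        ((continuous_apply (A := fun _ : s => K) ⟨y, hy⟩).subtype_val.tendsto L).comp hL).cauchySeq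
  choose f hfK hf using fun x =>
    cauchySeq_tendsto_of_isComplete hK.isComplete (fun n => hFK (σ n) x) (hcauchy x)
  exact ⟨f, σ, hσ, hfK, hf⟩

lemma BoundedContinuousFunction.exists_subseq_tendsto [TopologicalSpace.SeparableSpace X]
    {F : ℕ → X →ᵇ ℝ} (hF : Equicontinuous fun n => ⇑(F n)) {M : ℝ} (hM : ∀ n x, ‖F n x‖ ≤ M) :
    ∃ (f : X →ᵇ ℝ) (σ : ℕ → ℕ), StrictMono σ ∧ (∀ x, ‖f x‖ ≤ M) ∧
      ∀ x, Tendsto (fun n => F (σ n) x) atTop (𝓝 (f x)) := by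
  obtain ⟨f, σ, hσ, hfM, hf⟩ := hF.exists_subseq_tendsto (isCompact_closedBall 0 M)
    fun n x => mem_closedBall_zero_iff.2 (hM n x)
  have hf_cont : Continuous f :=
    (tendsto_pi_nhds.2 hf).continuous_of_equicontinuous (hF.comp σ)
  refine ⟨.ofNormedAddCommGroup f hf_cont M fun x => mem_closedBall_zero_iff.1 (hfM x), σ, hσ,
    fun x => mem_closedBall_zero_iff.1 (hfM x), hf⟩

end Subsequence

lemma exp_neg_div_le {t C ε : ℝ} (h : ‖t‖ ≤ C) : exp (-t / ε) ≤ exp (C / ‖ε‖) := by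
  refine exp_le_exp.2 ((Real.le_norm_self _).trans ?_)
  rw [norm_div, norm_neg]
  exact div_le_div_of_nonneg_right h (norm_nonneg ε)

section DualObjective

variable {X Y : Type*} [TopologicalSpace X] [MeasurableSpace X] [OpensMeasurableSpace X]
  [TopologicalSpace Y] [MeasurableSpace Y] [OpensMeasurableSpace Y]
  (P : Measure X) (Q : Measure Y) {ε : ℝ}

lemma integrable_exp_neg_div [IsFiniteMeasure Q] (ψ : Y →ᵇ ℝ) (ε : ℝ) :
    Integrable (fun y => exp (-ψ y / ε)) Q :=
  .of_bound (by fun_prop) (exp (‖ψ‖ / ‖ε‖)) <| ae_of_all _ fun y => by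
    rw [Real.norm_of_nonneg (exp_pos _).le]
    exact exp_neg_div_le (ψ.norm_coe_le_norm y)

lemma integral_exp_neg_div_pos [IsProbabilityMeasure Q] (ψ : Y →ᵇ ℝ) (ε : ℝ) :
    0 < ∫ y, exp (-ψ y / ε) ∂Q :=
  integral_exp_pos (f := fun y => -ψ y / ε) (integrable_exp_neg_div Q ψ ε)

variable [IsProbabilityMeasure P] [IsProbabilityMeasure Q]

lemma dualObj_le_of_forall_add_le (hε : 0 < ε) {φ : X →ᵇ ℝ} {ψ : Y →ᵇ ℝ} {M : ℝ}
    (h : ∀ x y, φ x + ψ y ≤ M) : dualObj P Q ε φ ψ ≤ M := by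
  set I := ∫ y, exp (-ψ y / ε) ∂Q
  have hφ (x : X) : φ x ≤ M + ε * log I := by
    have hexp : exp ((φ x - M) / ε) ≤ I := by
      calc exp ((φ x - M) / ε) = ∫ _ : Y, exp ((φ x - M) / ε) ∂Q := by simp
        _ ≤ I := integral_mono (integrable_const _) (integrable_exp_neg_div Q ψ ε) fun y =>
          exp_le_exp.2 (div_le_div_of_nonneg_right (by linarith [h x y]) hε.le)
    have := (div_le_iff₀' hε).1 ((le_log_iff_exp_le (integral_exp_neg_div_pos Q ψ ε)).2 hexp)
    linarith
  have := integral_mono (φ.integrable P) (integrable_const _) hφ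
  simp only [integral_const, probReal_univ, one_smul] at this
  unfold dualObj
  linarith

lemma dualObj_le_dualObj_of_shift (hε : 0 < ε) {φ φ' : X →ᵇ ℝ} {ψ ψ' : Y →ᵇ ℝ} (s : ℝ)
    (hφ : ∀ x, φ x - s ≤ φ' x) (hψ : ∀ y, ψ y + s ≤ ψ' y) :
    dualObj P Q ε φ ψ ≤ dualObj P Q ε φ' ψ' := by
  have hint : ∫ x, φ x ∂P - s ≤ ∫ x, φ' x ∂P := by
    have := integral_mono (f := fun x => φ x - s) ((φ.integrable P).sub (integrable_const s))
      (φ'.integrable P) hφ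
    rwa [integral_sub (φ.integrable P) (integrable_const s), integral_const, probReal_univ,
      one_smul] at this
  have hexp : ∫ y, exp (-ψ' y / ε) ∂Q ≤ exp (-s / ε) * ∫ y, exp (-ψ y / ε) ∂Q := by
    rw [← integral_const_mul]
    refine integral_mono (integrable_exp_neg_div Q ψ' ε)
      ((integrable_exp_neg_div Q ψ ε).const_mul _) fun y => ?_
    rw [← exp_add, ← add_div]
    exact exp_le_exp.2 (div_le_div_of_nonneg_right (by linarith [hψ y]) hε.le)
  have hlog := log_le_log (integral_exp_neg_div_pos Q ψ' ε) hexp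
  rw [log_mul (exp_pos _).ne' (integral_exp_neg_div_pos Q ψ ε).ne', log_exp] at hlog
  have := mul_le_mul_of_nonneg_left hlog hε.le
  rw [mul_add, mul_div_cancel₀ _ hε.ne'] at this
  unfold dualObj
  linarith

lemma tendsto_dualObj {ι : Type*} {l : Filter ι} [l.IsCountablyGenerated]
    {φ : ι → X →ᵇ ℝ} {ψ : ι → Y →ᵇ ℝ} {φ₀ : X →ᵇ ℝ} {ψ₀ : Y →ᵇ ℝ} {C : ℝ}
    (hφC : ∀ i x, ‖φ i x‖ ≤ C) (hψC : ∀ i y, ‖ψ i y‖ ≤ C)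
    (hφ : ∀ x, Tendsto (fun i => φ i x) l (𝓝 (φ₀ x)))
    (hψ : ∀ y, Tendsto (fun i => ψ i y) l (𝓝 (ψ₀ y))) :
    Tendsto (fun i => dualObj P Q ε (φ i) (ψ i)) l (𝓝 (dualObj P Q ε φ₀ ψ₀)) := by
  have hintφ := tendsto_integral_filter_of_dominated_convergence (fun _ => C)
    (.of_forall fun i => (φ i).continuous.aestronglyMeasurable)
    (.of_forall fun i => ae_of_all _ (hφC i)) (integrable_const (μ := P) C) (ae_of_all _ hφ)
  have hintψ := tendsto_integral_filter_of_dominated_convergence (fun _ => exp (C / ‖ε‖))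
    (.of_forall fun i => (integrable_exp_neg_div Q (ψ i) ε).aestronglyMeasurable)
    (.of_forall fun i => ae_of_all _ fun y => by
      rw [Real.norm_of_nonneg (exp_pos _).le]
      exact exp_neg_div_le (hψC i y))
    (integrable_const _)
    (ae_of_all _ fun y => (continuous_exp.tendsto _).comp ((hψ y).neg.div_const ε))
  exact hintφ.sub (tendsto_const_nhds.mul
    ((continuousAt_log (integral_exp_neg_div_pos Q ψ₀ ε).ne').tendsto.comp hintψ))

end DualObjective

lemma UniformContinuous.uniformEquicontinuous_image_cTransform {X Y : Type*}
    [PseudoMetricSpace X] [PseudoMetricSpace Y] [Nonempty X] [Nonempty Y] {c : X × Y → ℝ}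
    (hc0 : ∀ z, 0 ≤ c z) (hc : UniformContinuous c) :
    (cTransform (fun x y => c (x, y)) '' {g | BddAbove (range g)}).UniformEquicontinuous ∧
      (cTransform (fun y x => c (x, y)) '' {g | BddAbove (range g)}).UniformEquicontinuous :=
  ⟨_root_.uniformEquicontinuous_image_cTransform (fun _ _ => hc0 _) hc.uniformEquicontinuous_flip,
    _root_.uniformEquicontinuous_image_cTransform (fun _ _ => hc0 _)
      (hc.comp uniformContinuous_swap).uniformEquicontinuous_flip⟩

section Existence

variable {X Y : Type*} [PseudoMetricSpace X] [MeasurableSpace X] [OpensMeasurableSpace X]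
  [PseudoMetricSpace Y] [MeasurableSpace Y] [OpensMeasurableSpace Y]
  {P : Measure X} {Q : Measure Y} [IsProbabilityMeasure P] [IsProbabilityMeasure Q]
  {c : X × Y → ℝ} {M ε : ℝ}

/-- The witness is `((φ - s)^{cc}, (φ - s)^c)` with `s = sup φ`. -/
lemma exists_bounded_cTransform_pair_ge [Nonempty X] [Nonempty Y] (hc0 : ∀ z, 0 ≤ c z)
    (hcM : ∀ z, c z ≤ M) (hc : UniformContinuous c) (hε : 0 < ε) {φ : X →ᵇ ℝ} {ψ : Y →ᵇ ℝ}
    (h : ∀ x y, φ x + ψ y ≤ c (x, y)) :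
    ∃ (φ' : X →ᵇ ℝ) (ψ' : Y →ᵇ ℝ), (∀ x y, φ' x + ψ' y ≤ c (x, y)) ∧
      dualObj P Q ε φ ψ ≤ dualObj P Q ε φ' ψ' ∧ (∀ x, ‖φ' x‖ ≤ M) ∧ (∀ y, ‖ψ' y‖ ≤ M) ∧
      ⇑φ' ∈ cTransform (fun x y => c (x, y)) '' {g | BddAbove (range g)} ∧
      ⇑ψ' ∈ cTransform (fun y x => c (x, y)) '' {g | BddAbove (range g)} := by
  obtain ⟨y₀⟩ := ‹Nonempty Y›
  set s := ⨆ x, φ x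
  have hφs (x : X) : φ x ≤ s := le_ciSup φ.isBounded_range.bddAbove x
  set g : X → ℝ := fun x => φ x - s
  have hg : BddAbove (range g) := ⟨0, forall_mem_range.2 fun x => sub_nonpos.2 (hφs x)⟩
  set ψ₁ := cTransform (fun y x => c (x, y)) g
  have hψ₁_le (x : X) (y : Y) : ψ₁ y ≤ c (x, y) - g x := cTransform_le (fun _ _ => hc0 _) hg y x
  have hψ₁_nonneg (y : Y) : 0 ≤ ψ₁ y :=
    le_cTransform fun x => by linarith [hc0 (x, y), hφs x]
  have hψ₁_le_M (y : Y) : ψ₁ y ≤ M := by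
    have : s ≤ M + s - ψ₁ y := ciSup_le fun x => by linarith [hψ₁_le x y, hcM (x, y)]
    linarith
  have hψ₁ : BddAbove (range ψ₁) := ⟨M, forall_mem_range.2 hψ₁_le_M⟩
  set φ₁ := cTransform (fun x y => c (x, y)) ψ₁
  have hφ₁_le (x : X) (y : Y) : φ₁ x ≤ c (x, y) - ψ₁ y := cTransform_le (fun _ _ => hc0 _) hψ₁ x y
  have hφ₁_ge (x : X) : -M ≤ φ₁ x := le_cTransform fun y => by linarith [hc0 (x, y), hψ₁_le_M y]
  have hφ₁_mem : φ₁ ∈ cTransform (fun x y => c (x, y)) '' {g | BddAbove (range g)} :=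
    ⟨ψ₁, hψ₁, rfl⟩
  have hψ₁_mem : ψ₁ ∈ cTransform (fun y x => c (x, y)) '' {g | BddAbove (range g)} := ⟨g, hg, rfl⟩
  obtain ⟨hX, hY⟩ := hc.uniformEquicontinuous_image_cTransform hc0
  have hφ₁_cont : Continuous φ₁ := (hX.uniformContinuous ⟨φ₁, hφ₁_mem⟩).continuous
  have hψ₁_cont : Continuous ψ₁ := (hY.uniformContinuous ⟨ψ₁, hψ₁_mem⟩).continuous
  have hφ₁_norm (x : X) : ‖φ₁ x‖ ≤ M :=
    abs_le.2 ⟨hφ₁_ge x, by linarith [hφ₁_le x y₀, hcM (x, y₀), hψ₁_nonneg y₀]⟩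
  have hψ₁_norm (y : Y) : ‖ψ₁ y‖ ≤ M :=
    abs_le.2 ⟨by linarith [hψ₁_nonneg y, hψ₁_le_M y], hψ₁_le_M y⟩
  refine ⟨.ofNormedAddCommGroup φ₁ hφ₁_cont M hφ₁_norm,
    .ofNormedAddCommGroup ψ₁ hψ₁_cont M hψ₁_norm, fun x y => ?_, ?_, hφ₁_norm, hψ₁_norm,
    hφ₁_mem, hψ₁_mem⟩
  · show φ₁ x + ψ₁ y ≤ c (x, y)
    linarith [hφ₁_le x y]
  refine dualObj_le_dualObj_of_shift P Q hε s (fun x => ?_) (fun y => ?_)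
  · show φ x - s ≤ φ₁ x
    exact le_cTransform fun y => by linarith [hψ₁_le x y]
  · show ψ y + s ≤ ψ₁ y
    exact le_cTransform fun x => by linarith [h x y]

lemma exists_feasible_subseq_tendsto_dualObj [TopologicalSpace.SeparableSpace X]
    [TopologicalSpace.SeparableSpace Y] {Φ : ℕ → X →ᵇ ℝ} {Ψ : ℕ → Y →ᵇ ℝ}
    (hfeas : ∀ n x y, Φ n x + Ψ n y ≤ c (x, y)) (hΦM : ∀ n x, ‖Φ n x‖ ≤ M)
    (hΨM : ∀ n y, ‖Ψ n y‖ ≤ M) (hΦ : Equicontinuous fun n => ⇑(Φ n))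
    (hΨ : Equicontinuous fun n => ⇑(Ψ n)) :
    ∃ (φ : X →ᵇ ℝ) (ψ : Y →ᵇ ℝ) (σ : ℕ → ℕ), (∀ x y, φ x + ψ y ≤ c (x, y)) ∧ StrictMono σ ∧
      Tendsto (fun n => dualObj P Q ε (Φ (σ n)) (Ψ (σ n))) atTop (𝓝 (dualObj P Q ε φ ψ)) := by
  obtain ⟨φ, σ₁, hσ₁, -, hφ⟩ := exists_subseq_tendsto hΦ hΦM
  obtain ⟨ψ, σ₂, hσ₂, -, hψ⟩ := exists_subseq_tendsto (hΨ.comp σ₁) fun n => hΨM (σ₁ n)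
  have hφ' (x : X) : Tendsto (fun n => Φ (σ₁ (σ₂ n)) x) atTop (𝓝 (φ x)) :=
    (hφ x).comp hσ₂.tendsto_atTop
  refine ⟨φ, ψ, σ₁ ∘ σ₂, fun x y => le_of_tendsto' ((hφ' x).add (hψ y)) fun n => hfeas _ x y,
    hσ₁.comp hσ₂, tendsto_dualObj P Q (fun n => hΦM _) (fun n => hΨM _) hφ' hψ⟩

theorem exists_isDualMaximizer [TopologicalSpace.SeparableSpace X]
    [TopologicalSpace.SeparableSpace Y] (hc0 : ∀ z, 0 ≤ c z) (hcM : ∀ z, c z ≤ M)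
    (hc : UniformContinuous c) (hε : 0 < ε) :
    ∃ (φ : X →ᵇ ℝ) (ψ : Y →ᵇ ℝ), IsDualMaximizer c P Q ε φ ψ := by
  have := nonempty_of_isProbabilityMeasure P
  have := nonempty_of_isProbabilityMeasure Q
  set J : (X →ᵇ ℝ) × (Y →ᵇ ℝ) → ℝ := fun p => dualObj P Q ε p.1 p.2
  set S := J '' {p | ∀ x y, p.1 x + p.2 y ≤ c (x, y)}
  have hS : BddAbove S := ⟨M, forall_mem_image.2 fun p hp =>
    dualObj_le_of_forall_add_le P Q hε fun x y => (hp x y).trans (hcM _)⟩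
  obtain ⟨u, -, hu, hu_mem⟩ :=
    exists_seq_tendsto_sSup (S := S) ⟨_, (0, 0), fun x y => by simpa using hc0 (x, y), rfl⟩ hS
  choose p hp hpu using hu_mem
  choose Φ Ψ hfeas hle hΦM hΨM hΦ hΨ using fun n =>
    exists_bounded_cTransform_pair_ge (P := P) (Q := Q) hc0 hcM hc hε (hp n)
  obtain ⟨hX, hY⟩ := hc.uniformEquicontinuous_image_cTransform hc0
  have hΦ_eq : Equicontinuous fun n => ⇑(Φ n) := equicontinuous_iff_range.2 <|
    UniformEquicontinuous.equicontinuous <| hX.mono (range_subset_iff.2 hΦ)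
  have hΨ_eq : Equicontinuous fun n => ⇑(Ψ n) := equicontinuous_iff_range.2 <|
    UniformEquicontinuous.equicontinuous <| hY.mono (range_subset_iff.2 hΨ)
  obtain ⟨φ, ψ, σ, hφψ, hσ, hlim⟩ := exists_feasible_subseq_tendsto_dualObj (P := P) (Q := Q)
    (ε := ε) hfeas hΦM hΨM hΦ_eq hΨ_eq
  have hJ : Tendsto (fun n => J (Φ (σ n), Ψ (σ n))) atTop (𝓝 (sSup S)) :=
    tendsto_of_tendsto_of_tendsto_of_le_of_le (hu.comp hσ.tendsto_atTop) tendsto_const_nhds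
      (fun n => (hpu (σ n)).symm.le.trans (hle (σ n)))
      (fun n => le_csSup hS ⟨(Φ (σ n), Ψ (σ n)), hfeas (σ n), rfl⟩)
  refine ⟨φ, ψ, hφψ, fun φ' ψ' h' => ?_⟩
  rw [tendsto_nhds_unique hlim hJ]
  exact le_csSup hS ⟨(φ', ψ'), h', rfl⟩

end Existence

lemma ae_eq_const_mul_of_sq_integral_le {Z : Type*} [MeasurableSpace Z] {μ : Measure Z}
    {f g : Z → ℝ} (hf : Integrable (fun z => f z ^ 2) μ) (hg : Integrable (fun z => g z ^ 2) μ)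
    (hfg : Integrable (fun z => f z * g z) μ) (hf_pos : 0 < ∫ z, f z ^ 2 ∂μ)
    (h : (∫ z, f z ^ 2 ∂μ) * ∫ z, g z ^ 2 ∂μ ≤ (∫ z, f z * g z ∂μ) ^ 2) :
    ∀ᵐ z ∂μ, g z = (∫ z, f z * g z ∂μ) / (∫ z, f z ^ 2 ∂μ) * f z := by
  set A := ∫ z, f z ^ 2 ∂μ
  set B := ∫ z, f z * g z ∂μ
  set t := B / A
  have hexpand : (fun z => (g z - t * f z) ^ 2) =
      fun z => g z ^ 2 - 2 * t * (f z * g z) + t ^ 2 * f z ^ 2 := by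
    funext z; ring
  have hsub : Integrable (fun z => g z ^ 2 - 2 * t * (f z * g z)) μ := hg.sub (hfg.const_mul _)
  have hint : Integrable (fun z => g z ^ 2 - 2 * t * (f z * g z) + t ^ 2 * f z ^ 2) μ :=
    hsub.add (hf.const_mul _)
  have hzero : ∫ z, (g z - t * f z) ^ 2 ∂μ = 0 := by
    refine le_antisymm ?_ (integral_nonneg fun z => sq_nonneg _)
    rw [hexpand, integral_add hsub (hf.const_mul _), integral_sub hg (hfg.const_mul _),
      integral_const_mul, integral_const_mul]
    have : A * (∫ z, g z ^ 2 ∂μ - 2 * t * B + t ^ 2 * A) ≤ 0 := by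
      simp only [t]; field_simp; nlinarith
    exact nonpos_of_mul_nonpos_right this hf_pos
  filter_upwards [(integral_eq_zero_iff_of_nonneg (fun z => sq_nonneg _)
    (hexpand ▸ hint)).1 hzero] with z hz
  linarith [pow_eq_zero_iff two_ne_zero |>.1 hz]

section Uniqueness

variable {X Y : Type*} [TopologicalSpace X] [MeasurableSpace X] [OpensMeasurableSpace X]
  [TopologicalSpace Y] [MeasurableSpace Y] {P : Measure X} {Q : Measure Y} [IsFiniteMeasure P]
  {c : X × Y → ℝ} {ε : ℝ} {φ₁ φ₂ : X →ᵇ ℝ} {ψ₁ ψ₂ : Y →ᵇ ℝ}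

lemma IsDualMaximizer.ae_le_of_ae_eq_add {φ φ' : X →ᵇ ℝ} {ψ ψ' : Y →ᵇ ℝ}
    (h : IsDualMaximizer c P Q ε φ ψ) (h' : ∀ x y, φ' x + ψ' y ≤ c (x, y)) {b : ℝ}
    (hψ : ∀ᵐ y ∂Q, ψ y = ψ' y + b) : ∀ᵐ x ∂P, φ' x - b ≤ φ x := by
  set F := φ ⊔ (φ' - const X b)
  set G := ψ ⊓ (ψ' + const Y b)
  have hFG : dualObj P Q ε F G ≤ dualObj P Q ε φ ψ := h.2 F G fun x y => by
    simp only [F, G, coe_sup, coe_inf, coe_sub, coe_add, Pi.sup_apply, Pi.inf_apply,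
      Pi.sub_apply, Pi.add_apply, const_apply]
    rcases le_total (φ x) (φ' x - b) with hx | hx
    · rw [max_eq_right hx]; linarith [min_le_right (ψ y) (ψ' y + b), h' x y]
    · rw [max_eq_left hx]; linarith [min_le_left (ψ y) (ψ' y + b), h.1 x y]
  have hG : ∫ y, exp (-G y / ε) ∂Q = ∫ y, exp (-ψ y / ε) ∂Q :=
    integral_congr_ae <| hψ.mono fun y hy => by simp [G, hy]
  have hφF : ⇑φ ≤ᵐ[P] ⇑F := ae_of_all _ fun x => le_sup_left (a := φ x)
  unfold dualObj at hFG
  rw [hG] at hFG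
  have hF : ⇑φ =ᵐ[P] ⇑F := (integral_eq_iff_of_ae_le (φ.integrable P) (F.integrable P) hφF).1
    (le_antisymm (integral_mono_ae (φ.integrable P) (F.integrable P) hφF) (by linarith))
  filter_upwards [hF] with x hx
  have : φ' x - b ≤ F x := le_sup_right (a := φ x) (b := φ' x - b)
  linarith

variable [OpensMeasurableSpace Y] [IsProbabilityMeasure Q]

lemma exists_ae_eq_add_of_integral_exp_le (hε : 0 < ε)
    (h : (∫ y, exp (-ψ₁ y / ε) ∂Q) * ∫ y, exp (-ψ₂ y / ε) ∂Q ≤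
      (∫ y, exp (-(ψ₁ y + ψ₂ y) / (2 * ε)) ∂Q) ^ 2) :
    ∃ a, ∀ᵐ y ∂Q, ψ₁ y = ψ₂ y + a := by
  have hsq (t : ℝ) : exp (-t / (2 * ε)) ^ 2 = exp (-t / ε) := by
    rw [sq, ← exp_add]; congr 1; field_simp; ring
  have hmul (y : Y) : exp (-ψ₁ y / (2 * ε)) * exp (-ψ₂ y / (2 * ε)) =
      exp (-(ψ₁ y + ψ₂ y) / (2 * ε)) := by
    rw [← exp_add]; congr 1; ring
  have hA : 0 < ∫ y, exp (-ψ₁ y / (2 * ε)) ^ 2 ∂Q := by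
    simpa only [hsq] using integral_exp_neg_div_pos Q ψ₁ ε
  have hB : 0 < ∫ y, exp (-ψ₁ y / (2 * ε)) * exp (-ψ₂ y / (2 * ε)) ∂Q := by
    simpa only [hmul, coe_add, Pi.add_apply] using integral_exp_neg_div_pos Q (ψ₁ + ψ₂) (2 * ε)
  have hcs := ae_eq_const_mul_of_sq_integral_le (μ := Q)
    (f := fun y => exp (-ψ₁ y / (2 * ε))) (g := fun y => exp (-ψ₂ y / (2 * ε)))
    (by simpa only [hsq] using integrable_exp_neg_div Q ψ₁ ε)
    (by simpa only [hsq] using integrable_exp_neg_div Q ψ₂ ε)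
    (by simpa only [hmul, coe_add, Pi.add_apply] using
      integrable_exp_neg_div Q (ψ₁ + ψ₂) (2 * ε))
    hA (by simpa only [hsq, hmul] using h)
  set A := ∫ y, exp (-ψ₁ y / (2 * ε)) ^ 2 ∂Q
  set B := ∫ y, exp (-ψ₁ y / (2 * ε)) * exp (-ψ₂ y / (2 * ε)) ∂Q
  refine ⟨2 * ε * log (B / A), hcs.mono fun y hy => ?_⟩
  have := congrArg log hy
  rw [log_mul (div_pos hB hA).ne' (exp_pos _).ne', log_exp, log_exp] at this
  field_simp at this
  linarith

lemma IsDualMaximizer.exists_snd_ae_eq_add (hε : 0 < ε) (h₁ : IsDualMaximizer c P Q ε φ₁ ψ₁)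
    (h₂ : IsDualMaximizer c P Q ε φ₂ ψ₂) : ∃ a, ∀ᵐ y ∂Q, ψ₁ y = ψ₂ y + a := by
  refine exists_ae_eq_add_of_integral_exp_le hε ?_
  have hmid := h₁.2 ((2⁻¹ : ℝ) • (φ₁ + φ₂)) ((2⁻¹ : ℝ) • (ψ₁ + ψ₂)) fun x y => by
    simp only [coe_smul, coe_add, Pi.add_apply, smul_eq_mul]
    linarith [h₁.1 x y, h₂.1 x y]
  have h₂₁ := h₂.2 _ _ h₁.1
  have hint : ∫ x, ((2⁻¹ : ℝ) • (φ₁ + φ₂)) x ∂P = (∫ x, φ₁ x ∂P + ∫ x, φ₂ x ∂P) / 2 := by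
    simp only [coe_smul, coe_add, Pi.add_apply, smul_eq_mul, integral_const_mul,
      integral_add (φ₁.integrable P) (φ₂.integrable P)]
    ring
  have hexp : ∫ y, exp (-((2⁻¹ : ℝ) • (ψ₁ + ψ₂)) y / ε) ∂Q =
      ∫ y, exp (-(ψ₁ y + ψ₂ y) / (2 * ε)) ∂Q := by
    congr 1 with y
    simp only [coe_smul, coe_add, Pi.add_apply, smul_eq_mul]
    ring_nf
  unfold dualObj at hmid h₂₁
  rw [hint, hexp] at hmid
  have hpos₁ := integral_exp_neg_div_pos Q ψ₁ ε
  have hpos₂ := integral_exp_neg_div_pos Q ψ₂ ε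
  have hpos := integral_exp_neg_div_pos Q (ψ₁ + ψ₂) (2 * ε)
  simp only [coe_add, Pi.add_apply] at hpos
  rw [← log_le_log_iff (by positivity) (by positivity), log_mul hpos₁.ne' hpos₂.ne', log_pow]
  refine le_of_mul_le_mul_left ?_ hε
  push_cast
  linarith

end Uniqueness

theorem dual_maximizer_exists_unique_general
    {X Y : Type*} [MetricSpace X] [TopologicalSpace.SeparableSpace X]
    [MeasurableSpace X] [BorelSpace X]
    [MetricSpace Y] [TopologicalSpace.SeparableSpace Y]
    [MeasurableSpace Y] [BorelSpace Y]
    (c : X × Y → ℝ) (hc_nonneg : ∀ z, 0 ≤ c z) (hc_bdd : ∃ M, ∀ z, c z ≤ M)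
    (hc_uc : UniformContinuous c)
    (P : Measure X) (Q : Measure Y) [IsProbabilityMeasure P] [IsProbabilityMeasure Q]
    (ε : ℝ) (hε : 0 < ε) :
    (∃ (φs : BoundedContinuousFunction X ℝ) (ψs : BoundedContinuousFunction Y ℝ),
        IsDualMaximizer c P Q ε φs ψs) ∧
    (∀ (φ₁ : BoundedContinuousFunction X ℝ) (ψ₁ : BoundedContinuousFunction Y ℝ)
        (φ₂ : BoundedContinuousFunction X ℝ) (ψ₂ : BoundedContinuousFunction Y ℝ),
        IsDualMaximizer c P Q ε φ₁ ψ₁ → IsDualMaximizer c P Q ε φ₂ ψ₂ →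
        ∃ a : ℝ, (∀ᵐ x ∂P, φ₁ x = φ₂ x - a) ∧ (∀ᵐ y ∂Q, ψ₁ y = ψ₂ y + a)) := by
  obtain ⟨M, hM⟩ := hc_bdd
  refine ⟨exists_isDualMaximizer hc_nonneg hM hc_uc hε, fun φ₁ ψ₁ φ₂ ψ₂ h₁ h₂ => ?_⟩
  obtain ⟨a, ha⟩ := h₁.exists_snd_ae_eq_add hε h₂
  have hle := h₁.ae_le_of_ae_eq_add h₂.1 ha
  have hge := h₂.ae_le_of_ae_eq_add h₁.1 (b := -a) (ha.mono fun y hy => by linarith)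
  refine ⟨a, ?_, ha⟩
  filter_upwards [hle, hge] with x hx₁ hx₂
  linarith

/-- For a bounded uniformly continuous cost on Polish metric spaces, the dual problem
admits a maximizer `(φ*, ψ*) ∈ Φ_c`, unique up to a constant shift. -/
theorem dual_maximizer_exists_unique
    {X Y : Type*} [MetricSpace X] [CompleteSpace X] [TopologicalSpace.SeparableSpace X]
    [MeasurableSpace X] [BorelSpace X]
    [MetricSpace Y] [CompleteSpace Y] [TopologicalSpace.SeparableSpace Y]
    [MeasurableSpace Y] [BorelSpace Y]
    (c : X × Y → ℝ) (hc_nonneg : ∀ z, 0 ≤ c z) (hc_bdd : ∃ M, ∀ z, c z ≤ M)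
    (hc_uc : UniformContinuous c)
    (P : Measure X) (Q : Measure Y) [IsProbabilityMeasure P] [IsProbabilityMeasure Q]
    (ε : ℝ) (hε : 0 < ε) :
    (∃ (φs : BoundedContinuousFunction X ℝ) (ψs : BoundedContinuousFunction Y ℝ),
        IsDualMaximizer c P Q ε φs ψs) ∧
    (∀ (φ₁ : BoundedContinuousFunction X ℝ) (ψ₁ : BoundedContinuousFunction Y ℝ)
        (φ₂ : BoundedContinuousFunction X ℝ) (ψ₂ : BoundedContinuousFunction Y ℝ),
        IsDualMaximizer c P Q ε φ₁ ψ₁ → IsDualMaximizer c P Q ε φ₂ ψ₂ →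
        ∃ a : ℝ, (∀ᵐ x ∂P, φ₁ x = φ₂ x - a) ∧ (∀ᵐ y ∂Q, ψ₁ y = ψ₂ y + a)) :=
  dual_maximizer_exists_unique_general c hc_nonneg hc_bdd hc_uc P Q ε hε
end

section
/- Let X and Y be compact metric spaces, c : X × Y → ℝ continuous, P a Borel probability measure on X, Q a Borel probability measure on Y, and ε > 0. Define F : C(X × Y) → ℝ by F(p) = − max_{(φ,ψ) ∈ Φ_{c−p}} { ∫ φ dP − ε log ∫ e^{−ψ/ε} dQ }, where Φ_{c−p} is the set of pairs of continuous functions (φ,ψ) with φ(x) + ψ(y) ≤ c(x,y) − p(x,y) for all x,y (the maximum exists). Then F is convex and lower semicontinuous on C(X × Y) equipped with the uniform norm. -/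
/-! The value `V p = sup {G z | z ∈ Φ_{c-p}}` is concave in `p`: the objective `G` is concave,
since `ψ ↦ log ∫ e^{-ψ/ε} dQ` is convex by Hölder's inequality, and the constraint sets have a
convex graph. It is `1`-Lipschitz for the uniform norm: lowering `φ` by `‖p - p'‖` turns a pair
feasible for `p` into one feasible for `p'` and lowers `G` by exactly `‖p - p'‖` since `P` is a
probability measure. Hence `F = -V` is convex and continuous. -/

open MeasureTheory Filter Topology

/-- The functional `F(p) = − sup_{(φ,ψ) ∈ Φ_{c−p}} { ∫ φ dP − ε log ∫ e^{−ψ/ε} dQ }`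
on `C(X × Y)` (for compact `X`, `Y` the supremum is attained, i.e. it is a maximum). -/
noncomputable def dualF {X Y : Type*} [TopologicalSpace X] [TopologicalSpace Y]
    [MeasurableSpace X] [MeasurableSpace Y]
    (c : X × Y → ℝ) (P : Measure X) (Q : Measure Y) (ε : ℝ) (p : C(X × Y, ℝ)) : ℝ :=
  -sSup ((fun φψ : C(X, ℝ) × C(Y, ℝ) =>
      ∫ x, φψ.1 x ∂P - ε * Real.log (∫ y, Real.exp (-(φψ.2 y) / ε) ∂Q)) ''
    {φψ : C(X, ℝ) × C(Y, ℝ) | ∀ x y, φψ.1 x + φψ.2 y ≤ c (x, y) - p (x, y)})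

open Real Set

theorem Continuous.integrable_of_compactSpace {α E : Type*} [TopologicalSpace α] [CompactSpace α]
    [MeasurableSpace α] [OpensMeasurableSpace α] [NormedAddCommGroup E] {μ : Measure α}
    [IsFiniteMeasure μ] {f : α → E} (hf : Continuous f) : Integrable f μ :=
  hf.integrable_of_hasCompactSupport (HasCompactSupport.of_compactSpace f)

section LogIntegralExp

variable {α : Type*} [MeasurableSpace α] {μ : Measure α}

theorem convex_setOf_integrable_exp :
    Convex ℝ {f : α → ℝ | Integrable (fun x => exp (f x)) μ} := by
  intro f hf g hg a b ha hb hab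
  have hfm : AEMeasurable f μ := by simpa using hf.1.aemeasurable.log
  have hgm : AEMeasurable g μ := by simpa using hg.1.aemeasurable.log
  refine ((hf.const_mul a).add (hg.const_mul b)).mono'
    ((hfm.const_smul a).add (hgm.const_smul b)).exp.aestronglyMeasurable
    (ae_of_all _ fun x => ?_)
  rw [norm_of_nonneg (exp_pos _).le]
  exact convexOn_exp.2 (mem_univ _) (mem_univ _) ha hb hab

theorem convexOn_log_integral_exp [NeZero μ] :
    ConvexOn ℝ {f : α → ℝ | Integrable (fun x => exp (f x)) μ}
      (fun f => log (∫ x, exp (f x) ∂μ)) := by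
  refine ⟨convex_setOf_integrable_exp, fun f hf g hg a b ha hb hab => ?_⟩
  set u := log (∫ x, exp (f x) ∂μ)
  set v := log (∫ x, exp (g x) ∂μ)
  have hu : exp u = ∫ x, exp (f x) ∂μ := exp_log (integral_exp_pos hf)
  have hv : exp v = ∫ x, exp (g x) ∂μ := exp_log (integral_exp_pos hg)
  -- Hölder's inequality, obtained from convexity of `exp` after normalising `exp ∘ f`, `exp ∘ g`.
  have hpointwise (x : α) : exp ((a • f + b • g) x) ≤
      exp (a * u + b * v) * (a * (exp (f x) / exp u) + b * (exp (g x) / exp v)) := by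
    calc exp ((a • f + b • g) x)
        = exp (a * u + b * v) * exp (a * (f x - u) + b * (g x - v)) := by
          rw [← exp_add]; simp only [Pi.add_apply, Pi.smul_apply, smul_eq_mul]; ring_nf
      _ ≤ exp (a * u + b * v) * (a * exp (f x - u) + b * exp (g x - v)) := by
          gcongr; exact convexOn_exp.2 (mem_univ _) (mem_univ _) ha hb hab
      _ = _ := by rw [exp_sub, exp_sub]
  have hint : ∫ x, exp ((a • f + b • g) x) ∂μ ≤ exp (a * u + b * v) := calc
    _ ≤ ∫ x, exp (a * u + b * v) * (a * (exp (f x) / exp u) + b * (exp (g x) / exp v)) ∂μ :=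
        integral_mono_of_nonneg (ae_of_all _ fun x => (exp_pos _).le)
          ((((hf.div_const _).const_mul a).add ((hg.div_const _).const_mul b)).const_mul _)
          (ae_of_all _ hpointwise)
    _ = exp (a * u + b * v) * (a * ((∫ x, exp (f x) ∂μ) / exp u)
          + b * ((∫ x, exp (g x) ∂μ) / exp v)) := by
        rw [integral_const_mul, integral_add ((hf.div_const _).const_mul a)
          ((hg.div_const _).const_mul b), integral_const_mul, integral_const_mul,
          integral_div, integral_div]
    _ = exp (a * u + b * v) := by
        rw [← hu, ← hv, div_self (exp_pos _).ne', div_self (exp_pos _).ne', mul_one, mul_one,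
          hab, mul_one]
  calc log (∫ x, exp ((a • f + b • g) x) ∂μ)
      ≤ log (exp (a * u + b * v)) :=
        log_le_log (integral_exp_pos (convex_setOf_integrable_exp hf hg ha hb hab)) hint
    _ = a • u + b • v := log_exp _

end LogIntegralExp

section ValueFunction

variable {E F : Type*} {G : F → ℝ} {S : E → Set F}

theorem concaveOn_sSup_image [AddCommMonoid E] [Module ℝ E] [AddCommMonoid F] [Module ℝ F]
    (hG : ConcaveOn ℝ univ G) (hS : Convex ℝ {x : E × F | x.2 ∈ S x.1})
    (hne : ∀ p, (S p).Nonempty) (hbdd : ∀ p, BddAbove (G '' S p)) :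
    ConcaveOn ℝ univ fun p => sSup (G '' S p) := by
  refine ⟨convex_univ, fun p _ q _ a b ha hb hab => ?_⟩
  rw [← Real.sSup_smul_of_nonneg ha, ← Real.sSup_smul_of_nonneg hb,
    ← csSup_add ((hne p).image G).smul_set ((hbdd p).smul_of_nonneg ha)
      ((hne q).image G).smul_set ((hbdd q).smul_of_nonneg hb)]
  refine csSup_le (((hne p).image G).smul_set.add ((hne q).image G).smul_set) ?_
  rintro _ ⟨_, ⟨_, ⟨z, hz, rfl⟩, rfl⟩, _, ⟨_, ⟨w, hw, rfl⟩, rfl⟩, rfl⟩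
  exact (hG.2 trivial trivial ha hb hab).trans
    (le_csSup (hbdd _) ⟨_, hS (x := (p, z)) hz (y := (q, w)) hw ha hb hab, rfl⟩)

theorem lipschitzWith_sSup_image [PseudoMetricSpace E]
    (hS : ∀ p p', ∀ z ∈ S p, ∃ z' ∈ S p', G z - dist p p' ≤ G z')
    (hne : ∀ p, (S p).Nonempty) (hbdd : ∀ p, BddAbove (G '' S p)) :
    LipschitzWith 1 fun p => sSup (G '' S p) := by
  refine LipschitzWith.of_le_add fun p p' => csSup_le ((hne p).image G) ?_
  rintro _ ⟨z, hz, rfl⟩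
  obtain ⟨z', hz', hle⟩ := hS p p' z hz
  linarith [le_csSup (hbdd p') ⟨z', hz', rfl⟩]

end ValueFunction

section DualProblem

variable {X Y : Type*} [TopologicalSpace X] [TopologicalSpace Y]

noncomputable def dualObjective [MeasurableSpace X] [MeasurableSpace Y] (P : Measure X)
    (Q : Measure Y) (ε : ℝ) (φψ : C(X, ℝ) × C(Y, ℝ)) : ℝ :=
  ∫ x, φψ.1 x ∂P - ε * log (∫ y, exp (-(φψ.2 y) / ε) ∂Q)

def dualFeasible (c : X × Y → ℝ) (p : C(X × Y, ℝ)) : Set (C(X, ℝ) × C(Y, ℝ)) :=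
  {φψ | ∀ x y, φψ.1 x + φψ.2 y ≤ c (x, y) - p (x, y)}

theorem dualF_eq_neg_sSup [MeasurableSpace X] [MeasurableSpace Y] (c : X × Y → ℝ)
    (P : Measure X) (Q : Measure Y) (ε : ℝ) :
    dualF c P Q ε = fun p => -sSup (dualObjective P Q ε '' dualFeasible c p) :=
  rfl

theorem concaveOn_dualObjective [CompactSpace X] [CompactSpace Y]
    [MeasurableSpace X] [MeasurableSpace Y] [OpensMeasurableSpace X] [OpensMeasurableSpace Y]
    {P : Measure X} {Q : Measure Y} [IsFiniteMeasure P] [IsFiniteMeasure Q] [NeZero Q]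
    {ε : ℝ} (hε : 0 ≤ ε) : ConcaveOn ℝ univ (dualObjective P Q ε) := by
  refine ⟨convex_univ, fun ⟨φ₁, ψ₁⟩ _ ⟨φ₂, ψ₂⟩ _ a b ha hb hab => ?_⟩
  have hφ : ∫ x, (a • φ₁ + b • φ₂) x ∂P = a * ∫ x, φ₁ x ∂P + b * ∫ x, φ₂ x ∂P := by
    simp only [ContinuousMap.add_apply, ContinuousMap.smul_apply, smul_eq_mul]
    rw [integral_add (φ₁.continuous.integrable_of_compactSpace.const_mul a)
      (φ₂.continuous.integrable_of_compactSpace.const_mul b), integral_const_mul,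
      integral_const_mul]
  have hψ := (convexOn_log_integral_exp (μ := Q)).2
    (x := fun y => -ψ₁ y / ε) (by fun_prop : Continuous _).integrable_of_compactSpace
    (y := fun y => -ψ₂ y / ε) (by fun_prop : Continuous _).integrable_of_compactSpace ha hb hab
  have hcomb : (a • fun y => -ψ₁ y / ε) + (b • fun y => -ψ₂ y / ε) =
      fun y => -(a • ψ₁ + b • ψ₂) y / ε := by
    ext y; simp only [Pi.add_apply, Pi.smul_apply, ContinuousMap.add_apply,
      ContinuousMap.smul_apply, smul_eq_mul]; ring
  simp only [hcomb, smul_eq_mul] at hψ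
  simp only [dualObjective, Prod.smul_mk, Prod.mk_add_mk, smul_eq_mul, hφ]
  linarith [mul_le_mul_of_nonneg_left hψ hε]

theorem dualObjective_le_of_forall_add_le [CompactSpace X] [CompactSpace Y]
    [MeasurableSpace X] [MeasurableSpace Y] [OpensMeasurableSpace X] [OpensMeasurableSpace Y]
    (P : Measure X) (Q : Measure Y) [IsProbabilityMeasure P] [IsProbabilityMeasure Q]
    {ε : ℝ} (hε : 0 < ε) {φ : C(X, ℝ)} {ψ : C(Y, ℝ)} {M : ℝ} (h : ∀ x y, φ x + ψ y ≤ M) :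
    dualObjective P Q ε (φ, ψ) ≤ M := by
  set m := ∫ x, φ x ∂P
  have hm (y : Y) : m + ψ y ≤ M := by
    have : m ≤ ∫ _, (M - ψ y) ∂P :=
      integral_mono φ.continuous.integrable_of_compactSpace (integrable_const _)
        fun x => by linarith [h x y]
    simp only [integral_const, probReal_univ, one_smul] at this
    linarith
  have hexp : exp ((m - M) / ε) ≤ ∫ y, exp (-ψ y / ε) ∂Q := by
    calc exp ((m - M) / ε) = ∫ _, exp ((m - M) / ε) ∂Q := by simp
      _ ≤ _ := integral_mono (integrable_const _)
          (by fun_prop : Continuous _).integrable_of_compactSpace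
          fun y => exp_le_exp.2 (div_le_div_of_nonneg_right (by linarith [hm y]) hε.le)
  have hlog := (le_log_iff_exp_le ((exp_pos _).trans_le hexp)).2 hexp
  rw [div_le_iff₀ hε] at hlog
  simp only [dualObjective]
  linarith

theorem dualObjective_sub_const [CompactSpace X] [MeasurableSpace X] [MeasurableSpace Y]
    [OpensMeasurableSpace X] (P : Measure X) (Q : Measure Y) [IsProbabilityMeasure P]
    (ε δ : ℝ) (φ : C(X, ℝ)) (ψ : C(Y, ℝ)) :
    dualObjective P Q ε (φ - ContinuousMap.const X δ, ψ) = dualObjective P Q ε (φ, ψ) - δ := by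
  simp only [dualObjective, ContinuousMap.sub_apply, ContinuousMap.const_apply]
  rw [integral_sub φ.continuous.integrable_of_compactSpace (integrable_const _)]
  simp only [integral_const, probReal_univ, one_smul]
  ring

theorem dualFeasible_nonempty [CompactSpace X] [CompactSpace Y] {c : X × Y → ℝ}
    (hc : Continuous c) (p : C(X × Y, ℝ)) : (dualFeasible c p).Nonempty := by
  obtain ⟨m, hm⟩ := (isCompact_range (hc.sub p.continuous)).bddBelow
  exact ⟨(ContinuousMap.const X m, 0), fun x y => by simpa using hm ⟨(x, y), rfl⟩⟩

theorem convex_dualFeasible_graph (c : X × Y → ℝ) :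
    Convex ℝ {pz : C(X × Y, ℝ) × (C(X, ℝ) × C(Y, ℝ)) | pz.2 ∈ dualFeasible c pz.1} := by
  rintro ⟨p₁, φ₁, ψ₁⟩ h₁ ⟨p₂, φ₂, ψ₂⟩ h₂ a b ha hb hab x y
  have hc : c (x, y) = a * c (x, y) + b * c (x, y) := by rw [← add_mul, hab, one_mul]
  have k₁ := mul_le_mul_of_nonneg_left (h₁ x y) ha
  have k₂ := mul_le_mul_of_nonneg_left (h₂ x y) hb
  simp only [Prod.smul_mk, Prod.mk_add_mk, ContinuousMap.add_apply, ContinuousMap.smul_apply,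
    smul_eq_mul]
  linarith

theorem sub_const_dist_mem_dualFeasible [CompactSpace X] [CompactSpace Y] {c : X × Y → ℝ}
    {p : C(X × Y, ℝ)} {φ : C(X, ℝ)} {ψ : C(Y, ℝ)} (h : (φ, ψ) ∈ dualFeasible c p)
    (p' : C(X × Y, ℝ)) : (φ - ContinuousMap.const X (dist p p'), ψ) ∈ dualFeasible c p' := by
  intro x y
  have hdist := (abs_le.1 ((Real.dist_eq _ _).symm.trans_le
    (ContinuousMap.dist_apply_le_dist (f := p) (g := p') (x, y)))).1
  have hxy : φ x + ψ y ≤ c (x, y) - p (x, y) := h x y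
  simp only [ContinuousMap.sub_apply, ContinuousMap.const_apply]
  linarith

theorem bddAbove_dualObjective_image_dualFeasible [CompactSpace X] [CompactSpace Y]
    [MeasurableSpace X] [MeasurableSpace Y] [OpensMeasurableSpace X] [OpensMeasurableSpace Y]
    {c : X × Y → ℝ} (hc : Continuous c) (P : Measure X) (Q : Measure Y) [IsProbabilityMeasure P]
    [IsProbabilityMeasure Q] {ε : ℝ} (hε : 0 < ε) (p : C(X × Y, ℝ)) :
    BddAbove (dualObjective P Q ε '' dualFeasible c p) := by
  obtain ⟨M, hM⟩ := (isCompact_range (hc.sub p.continuous)).bddAbove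
  refine ⟨M, ?_⟩
  rintro _ ⟨⟨φ, ψ⟩, h, rfl⟩
  exact dualObjective_le_of_forall_add_le P Q hε fun x y => (h x y).trans (hM ⟨(x, y), rfl⟩)

end DualProblem

/-- On compact metric spaces, the functional `F` is convex and lower semicontinuous on
`C(X × Y)` with the uniform norm. -/
theorem dualF_convex_lsc
    {X Y : Type*} [MetricSpace X] [CompactSpace X] [MeasurableSpace X] [BorelSpace X]
    [MetricSpace Y] [CompactSpace Y] [MeasurableSpace Y] [BorelSpace Y]
    (c : X × Y → ℝ) (hc : Continuous c)
    (P : Measure X) (Q : Measure Y) [IsProbabilityMeasure P] [IsProbabilityMeasure Q]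
    (ε : ℝ) (hε : 0 < ε) :
    ConvexOn ℝ Set.univ (dualF c P Q ε) ∧ LowerSemicontinuous (dualF c P Q ε) := by
  have hne := dualFeasible_nonempty hc
  have hbdd := bddAbove_dualObjective_image_dualFeasible hc P Q hε
  have hshift : ∀ p p', ∀ z ∈ dualFeasible c p, ∃ z' ∈ dualFeasible c p',
      dualObjective P Q ε z - dist p p' ≤ dualObjective P Q ε z' := fun p p' ⟨φ, ψ⟩ h =>
    ⟨_, sub_const_dist_mem_dualFeasible h p', (dualObjective_sub_const P Q ε _ φ ψ).ge⟩
  rw [dualF_eq_neg_sSup]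
  exact ⟨(concaveOn_sSup_image (concaveOn_dualObjective hε.le) (convex_dualFeasible_graph c)
      hne hbdd).neg,
    (lipschitzWith_sSup_image hshift hne hbdd).continuous.neg.lowerSemicontinuous⟩
end
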